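/- arXiv:1804.10360 — 2 statements merged into one kernel-verified Lean document; each statement's English description precedes it below -/
import Mathlib

section
/- Iwama identity (v): for Finsets X, Y ⊆ Fin n and distinct indices x, y (y ≠ x) with x ∉ X, y ∉ Y, y ∉ X, x ∉ Y, and y ∉ X ∪ Y, one has oplus X x ∘ oplus (insert x Y) y = oplus (X ∪ Y) y ∘ oplus (insert x Y) y ∘ oplus X x as functions on Fin n → ZMod 2. -/
def oplus {n : ℕ} (S : Finset (Fin n)) (t : Fin n) (v : Fin n → ZMod 2) :
    Fin n → ZMod 2 :=
  fun j => v j + (if j = t then ∏ i ∈ S, v i else 0)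

lemma prod_union_zmod2 {n : ℕ} (X Y : Finset (Fin n)) (v : Fin n → ZMod 2) :
    ∏ i ∈ X ∪ Y, v i = (∏ i ∈ X, v i) * ∏ i ∈ Y, v i := by
  have hid : ∀ a : ZMod 2, a * a = a := by decide
  have h1 : (∏ i ∈ (X ∪ Y) \ (X ∩ Y), v i) * ∏ i ∈ X ∩ Y, v i = ∏ i ∈ X ∪ Y, v i :=
    Finset.prod_sdiff (Finset.inter_subset_union)
  have h2 := Finset.prod_union_inter (f := v) (s₁ := X) (s₂ := Y)
  calc ∏ i ∈ X ∪ Y, v i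
      = (∏ i ∈ (X ∪ Y) \ (X ∩ Y), v i) * ((∏ i ∈ X ∩ Y, v i) * ∏ i ∈ X ∩ Y, v i) := by
        rw [hid]; exact h1.symm
    _ = ((∏ i ∈ X ∪ Y, v i) * ∏ i ∈ X ∩ Y, v i) := by rw [← mul_assoc, h1]
    _ = (∏ i ∈ X, v i) * ∏ i ∈ Y, v i := h2

lemma prod_congr_off {n : ℕ} (S : Finset (Fin n)) (t : Fin n) (ht : t ∉ S)
    (v w : Fin n → ZMod 2) (h : ∀ i, i ≠ t → w i = v i) :
    ∏ i ∈ S, w i = ∏ i ∈ S, v i :=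
  Finset.prod_congr rfl (fun i hi => h i (fun he => ht (he ▸ hi)))

theorem oplus_iwama_v {n : ℕ} (X Y : Finset (Fin n)) (x y : Fin n)
    (hxX : x ∉ X) (hyY : y ∉ Y) (hyX : y ∉ X) (hyx : y ≠ x) (hxY : x ∉ Y)
    (hyXY : y ∉ X ∪ Y) :
    oplus X x ∘ oplus (insert x Y) y =
      oplus (X ∪ Y) y ∘ oplus (insert x Y) y ∘ oplus X x := by
  funext v j
  set g := oplus (insert x Y) y v with hg
  set u := oplus X x v with hu
  set w := oplus (insert x Y) y u with hw
  have hgoff : ∀ i, i ≠ y → g i = v i := by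
    intro i hi; simp [hg, oplus, hi]
  have huoff : ∀ i, i ≠ x → u i = v i := by
    intro i hi; simp [hu, oplus, hi]
  have hwoff : ∀ i, i ≠ y → w i = u i := by
    intro i hi; simp [hw, oplus, hi]
  have hPg : ∏ i ∈ X, g i = ∏ i ∈ X, v i := prod_congr_off X y hyX v g hgoff
  have hPwu : ∏ i ∈ X ∪ Y, w i = ∏ i ∈ X ∪ Y, u i :=
    prod_congr_off (X ∪ Y) y hyXY u w hwoff
  have hxXY : x ∉ X ∪ Y := by simp [hxX, hxY]
  have hPuv : ∏ i ∈ X ∪ Y, u i = ∏ i ∈ X ∪ Y, v i :=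
    prod_congr_off (X ∪ Y) x hxXY v u huoff
  have hPu : ∏ i ∈ X ∪ Y, w i = (∏ i ∈ X, v i) * ∏ i ∈ Y, v i := by
    rw [hPwu, hPuv, prod_union_zmod2]
  have hPYu : ∏ i ∈ Y, u i = ∏ i ∈ Y, v i := prod_congr_off Y x hxY v u huoff
  have hgy : g y = v y + v x * ∏ i ∈ Y, v i := by
    simp [hg, oplus, Finset.prod_insert hxY]
  have hux : u x = v x + ∏ i ∈ X, v i := by simp [hu, oplus]
  have hwy : w y = v y + (v x + ∏ i ∈ X, v i) * ∏ i ∈ Y, v i := by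
    simp [hw, oplus, Finset.prod_insert hxY, hux, hPYu, huoff y hyx]
  show g j + (if j = x then ∏ i ∈ X, g i else 0)
      = w j + (if j = y then ∏ i ∈ X ∪ Y, w i else 0)
  by_cases hjy : j = y
  · rw [hjy, if_neg hyx, if_pos rfl, hPu, hgy, hwy, add_zero]
    have key : ∀ a b c d : ZMod 2, a + b * d = a + (b + c) * d + c * d := by decide
    exact key _ _ _ _
  · rw [if_neg hjy, hwoff j hjy]
    by_cases hjx : j = x
    · rw [hjx, if_pos rfl, hPg, hgoff x (Ne.symm hyx), hux, add_zero]
    · rw [if_neg hjx, hgoff j hjy, huoff j hjx]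
end

section
/- In a category equipped with an identity-on-objects involutive contravariant functor (−)° satisfying f°° = f, f ≫ f° ≫ f = f, and (f ≫ f°) ≫ (g ≫ g°) = (g ≫ g°) ≫ (f ≫ f°) for all parallel-domain f, g, the assignment f̄ := f ≫ f° defines a restriction structure, i.e. satisfies axioms [R.1]–[R.4]. -/
/-!
With `f̄ := f ≫ f°`, [R.1] is [INV.2] and [R.2] is [INV.3]. Since `f̄° = f°° ≫ f° = f̄`,
[INV.2] applied to `f°` makes every `f̄` idempotent, and then
`overline(ḡ ≫ f) = ḡ ≫ f̄ ≫ ḡ = ḡ ≫ ḡ ≫ f̄ = f̄ ≫ ḡ`. For [R.4], expand `f = f ≫ f° ≫ f` and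
commute `f° ≫ f`, which is the restriction of `f°`, past `ḡ`.
-/

open CategoryTheory

namespace CategoryTheory.InvolutionRestriction

variable {C : Type*} [Category C] (dag : ∀ {A B : C}, (A ⟶ B) → (B ⟶ A))

/-- The candidate restriction `f̄ = f ≫ f°`. -/
def restr {A B : C} (f : A ⟶ B) : A ⟶ A := f ≫ dag f

variable {dag}

theorem restr_comp_self (inv2 : ∀ {A B : C} (f : A ⟶ B), f ≫ dag f ≫ f = f)
    {A B : C} (f : A ⟶ B) : restr dag f ≫ f = f := by
  rw [restr, Category.assoc, inv2]

theorem restr_dag (inv1 : ∀ {A B : C} (f : A ⟶ B), dag (dag f) = f) {A B : C} (f : A ⟶ B) :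
    restr dag (dag f) = dag f ≫ f := by
  rw [restr, inv1]

theorem dag_restr (dag_comp : ∀ {A B D : C} (f : A ⟶ B) (g : B ⟶ D), dag (f ≫ g) = dag g ≫ dag f)
    (inv1 : ∀ {A B : C} (f : A ⟶ B), dag (dag f) = f) {A B : C} (f : A ⟶ B) :
    dag (restr dag f) = restr dag f := by
  rw [restr, dag_comp, inv1]

theorem restr_comp_restr_self (inv1 : ∀ {A B : C} (f : A ⟶ B), dag (dag f) = f)
    (inv2 : ∀ {A B : C} (f : A ⟶ B), f ≫ dag f ≫ f = f) {A B : C} (f : A ⟶ B) :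
    restr dag f ≫ restr dag f = restr dag f := by
  have h := inv2 (dag f)
  rw [inv1] at h
  rw [restr, Category.assoc, h]

theorem restr_restr_comp
    (dag_comp : ∀ {A B D : C} (f : A ⟶ B) (g : B ⟶ D), dag (f ≫ g) = dag g ≫ dag f)
    (inv1 : ∀ {A B : C} (f : A ⟶ B), dag (dag f) = f)
    (inv2 : ∀ {A B : C} (f : A ⟶ B), f ≫ dag f ≫ f = f)
    (inv3 : ∀ {A B B' : C} (f : A ⟶ B) (g : A ⟶ B'),
      restr dag f ≫ restr dag g = restr dag g ≫ restr dag f)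
    {A B B' : C} (f : A ⟶ B) (g : A ⟶ B') :
    restr dag (restr dag g ≫ f) = restr dag f ≫ restr dag g :=
  calc restr dag (restr dag g ≫ f)
      = restr dag g ≫ (restr dag f ≫ restr dag g) := by
        rw [restr, dag_comp, dag_restr dag_comp inv1]
        simp only [restr, Category.assoc]
    _ = (restr dag g ≫ restr dag g) ≫ restr dag f := by
        rw [inv3, Category.assoc]
    _ = restr dag f ≫ restr dag g := by
        rw [restr_comp_restr_self inv1 inv2, inv3]

theorem comp_restr
    (dag_comp : ∀ {A B D : C} (f : A ⟶ B) (g : B ⟶ D), dag (f ≫ g) = dag g ≫ dag f)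
    (inv1 : ∀ {A B : C} (f : A ⟶ B), dag (dag f) = f)
    (inv2 : ∀ {A B : C} (f : A ⟶ B), f ≫ dag f ≫ f = f)
    (inv3 : ∀ {A B B' : C} (f : A ⟶ B) (g : A ⟶ B'),
      restr dag f ≫ restr dag g = restr dag g ≫ restr dag f)
    {A B D : C} (f : A ⟶ B) (g : B ⟶ D) :
    f ≫ restr dag g = restr dag (f ≫ g) ≫ f :=
  calc f ≫ restr dag g
      = f ≫ restr dag (dag f) ≫ restr dag g := by
        rw [restr_dag inv1, ← Category.assoc f, inv2]
    _ = f ≫ restr dag g ≫ restr dag (dag f) := by rw [inv3]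
    _ = restr dag (f ≫ g) ≫ f := by
        rw [restr_dag inv1, restr, restr, dag_comp]
        simp only [Category.assoc]

end CategoryTheory.InvolutionRestriction

open CategoryTheory InvolutionRestriction

theorem inverse_gives_restriction_general {C : Type*} [Category C]
    (dag : ∀ {A B : C}, (A ⟶ B) → (B ⟶ A))
    (dag_comp : ∀ {A B D : C} (f : A ⟶ B) (g : B ⟶ D), dag (f ≫ g) = dag g ≫ dag f)
    (inv1 : ∀ {A B : C} (f : A ⟶ B), dag (dag f) = f)
    (inv2 : ∀ {A B : C} (f : A ⟶ B), f ≫ dag f ≫ f = f)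
    (inv3 : ∀ {A B B' : C} (f : A ⟶ B) (g : A ⟶ B'),
      (f ≫ dag f) ≫ (g ≫ dag g) = (g ≫ dag g) ≫ (f ≫ dag f)) :
    (∀ (A B : C) (f : A ⟶ B), (f ≫ dag f) ≫ f = f) ∧
    (∀ (A B B' : C) (f : A ⟶ B) (g : A ⟶ B'),
      (f ≫ dag f) ≫ (g ≫ dag g) = (g ≫ dag g) ≫ (f ≫ dag f)) ∧
    (∀ (A B B' : C) (f : A ⟶ B) (g : A ⟶ B'),
      ((g ≫ dag g) ≫ f) ≫ dag ((g ≫ dag g) ≫ f) = (f ≫ dag f) ≫ (g ≫ dag g)) ∧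
    (∀ (A B D : C) (f : A ⟶ B) (g : B ⟶ D),
      f ≫ (g ≫ dag g) = ((f ≫ g) ≫ dag (f ≫ g)) ≫ f) :=
  ⟨fun _ _ => restr_comp_self inv2,
   fun _ _ _ => inv3,
   fun _ _ _ => restr_restr_comp dag_comp inv1 inv2 inv3,
   fun _ _ _ => comp_restr dag_comp inv1 inv2 inv3⟩

theorem inverse_gives_restriction {C : Type*} [Category C]
    (dag : ∀ {A B : C}, (A ⟶ B) → (B ⟶ A))
    (dag_id : ∀ A : C, dag (𝟙 A) = 𝟙 A)
    (dag_comp : ∀ {A B D : C} (f : A ⟶ B) (g : B ⟶ D), dag (f ≫ g) = dag g ≫ dag f)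
    (inv1 : ∀ {A B : C} (f : A ⟶ B), dag (dag f) = f)
    (inv2 : ∀ {A B : C} (f : A ⟶ B), f ≫ dag f ≫ f = f)
    (inv3 : ∀ {A B B' : C} (f : A ⟶ B) (g : A ⟶ B'),
      (f ≫ dag f) ≫ (g ≫ dag g) = (g ≫ dag g) ≫ (f ≫ dag f)) :
    (∀ (A B : C) (f : A ⟶ B), (f ≫ dag f) ≫ f = f) ∧
    (∀ (A B B' : C) (f : A ⟶ B) (g : A ⟶ B'),
      (f ≫ dag f) ≫ (g ≫ dag g) = (g ≫ dag g) ≫ (f ≫ dag f)) ∧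
    (∀ (A B B' : C) (f : A ⟶ B) (g : A ⟶ B'),
      ((g ≫ dag g) ≫ f) ≫ dag ((g ≫ dag g) ≫ f) = (f ≫ dag f) ≫ (g ≫ dag g)) ∧
    (∀ (A B D : C) (f : A ⟶ B) (g : B ⟶ D),
      f ≫ (g ≫ dag g) = ((f ≫ g) ≫ dag (f ≫ g)) ≫ f) :=
  inverse_gives_restriction_general dag dag_comp inv1 inv2 inv3
end
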